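/- arXiv:1009.2778 — 7 statements merged into one kernel-verified Lean document; each statement's English description precedes it below -/
import Mathlib

section
/- For arbitrary real constants a0, a1, a2, the functions f(x,y,u) = (a2*y^2 + a1*y + a0)/(x - y) and h(x,y,u) = (2*a2*x*y + a1*(x+y) + 2*a0)/(x - y)^2 (which do not depend on u) satisfy the symmetry h(x,y,u) = h(y,x,u) and both compatibility identities (E1) and (E2) of a one-field Gibbons–Tsarev system, for all u and all pairwise distinct x, y, z. -/
/-! Neither `f` nor `h` depends on `u`, so every `d3` term vanishes, and `h` is symmetric, so
its second partial derivative is its first one with the arguments swapped. The remaining partial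
derivatives follow from the quotient rule, and then (E1) and (E2) are identities between rational
functions of `x, y, z`, checked by clearing the denominators `x - y`, `x - z`, `y - z`. -/

/-- Partial derivative of a three-argument function in its first argument. -/
noncomputable def d1 (F : ℝ → ℝ → ℝ → ℝ) (x y u : ℝ) : ℝ := deriv (fun s => F s y u) x
/-- Partial derivative of a three-argument function in its second argument. -/
noncomputable def d2 (F : ℝ → ℝ → ℝ → ℝ) (x y u : ℝ) : ℝ := deriv (fun s => F x s u) y
/-- Partial derivative of a three-argument function in its third argument. -/
noncomputable def d3 (F : ℝ → ℝ → ℝ → ℝ) (x y u : ℝ) : ℝ := deriv (fun s => F x y s) u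

/-- Left-hand side of the first Gibbons–Tsarev compatibility identity (E1). -/
noncomputable def gtE1 (f h : ℝ → ℝ → ℝ → ℝ) (x y z u : ℝ) : ℝ :=
  d3 f y z u - d3 f x z u + d1 f y z u * f x y u - d1 f x z u * f y x u
    + d2 f y z u * f x z u - d2 f x z u * f y z u + (f y z u - f x z u) * h x y u

/-- Left-hand side of the second Gibbons–Tsarev compatibility identity (E2). -/
noncomputable def gtE2 (f h : ℝ → ℝ → ℝ → ℝ) (x y z u : ℝ) : ℝ :=
  d3 h y z u - d3 h x z u + d1 h y z u * f x y u - d1 h x z u * f y x u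
    + d2 h y z u * f x z u - d2 h x z u * f y z u + (h y z u - h x z u) * h x y u

lemma d3_eq_zero {F : ℝ → ℝ → ℝ → ℝ} {G : ℝ → ℝ → ℝ} (hF : ∀ x y u, F x y u = G x y)
    (x y u : ℝ) : d3 F x y u = 0 := by
  simp only [d3, hF, deriv_const]

lemma d2_eq_d1_of_symm {F : ℝ → ℝ → ℝ → ℝ} (hF : ∀ x y u, F x y u = F y x u) (x y u : ℝ) :
    d2 F x y u = d1 F y x u := by
  simp only [d1, d2, hF x]

namespace GibbonsTsarevQuadratic

variable {a0 a1 a2 : ℝ} {f h : ℝ → ℝ → ℝ → ℝ}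

lemma d1_f (hf : ∀ x y u : ℝ, f x y u = (a2 * y ^ 2 + a1 * y + a0) / (x - y)) {x y : ℝ}
    (hxy : x ≠ y) (u : ℝ) : d1 f x y u = -(a2 * y ^ 2 + a1 * y + a0) / (x - y) ^ 2 := by
  have hden : HasDerivAt (fun s => s - y) 1 x := (hasDerivAt_id x).sub_const y
  have := (hasDerivAt_const x (a2 * y ^ 2 + a1 * y + a0)).fun_div hden (sub_ne_zero.mpr hxy)
  simp only [d1, hf]
  rw [this.deriv]
  ring

lemma d2_f (hf : ∀ x y u : ℝ, f x y u = (a2 * y ^ 2 + a1 * y + a0) / (x - y)) {x y : ℝ}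
    (hxy : x ≠ y) (u : ℝ) :
    d2 f x y u = ((2 * a2 * y + a1) * (x - y) + (a2 * y ^ 2 + a1 * y + a0)) / (x - y) ^ 2 := by
  have hnum : HasDerivAt (fun s => a2 * s ^ 2 + a1 * s + a0) (2 * a2 * y + a1) y := by
    refine ((((hasDerivAt_pow 2 y).const_mul a2).fun_add
      ((hasDerivAt_id' y).const_mul a1)).add_const a0).congr_deriv ?_
    norm_num
    ring
  have hden : HasDerivAt (fun s => x - s) (-1) y := by simpa using (hasDerivAt_id y).const_sub x
  have := hnum.fun_div hden (sub_ne_zero.mpr hxy)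
  simp only [d2, hf]
  rw [this.deriv]
  ring

lemma h_symm (hh : ∀ x y u : ℝ, h x y u = (2 * a2 * x * y + a1 * (x + y) + 2 * a0) / (x - y) ^ 2)
    (x y u : ℝ) : h x y u = h y x u := by
  rw [hh, hh]
  ring

lemma d1_h (hh : ∀ x y u : ℝ, h x y u = (2 * a2 * x * y + a1 * (x + y) + 2 * a0) / (x - y) ^ 2)
    {x y : ℝ} (hxy : x ≠ y) (u : ℝ) :
    d1 h x y u = ((2 * a2 * y + a1) * (x - y) - 2 * (2 * a2 * x * y + a1 * (x + y) + 2 * a0))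
      / (x - y) ^ 3 := by
  have hnum : HasDerivAt (fun s => 2 * a2 * s * y + a1 * (s + y) + 2 * a0) (2 * a2 * y + a1) x := by
    refine ((((hasDerivAt_id' x).const_mul (2 * a2)).mul_const y).fun_add
      (((hasDerivAt_id' x).add_const y).const_mul a1)).add_const (2 * a0) |>.congr_deriv ?_
    ring
  have hden : HasDerivAt (fun s => (s - y) ^ 2) (2 * (x - y)) x := by
    simpa using ((hasDerivAt_id x).sub_const y).fun_pow 2
  have := hnum.fun_div hden (pow_ne_zero 2 (sub_ne_zero.mpr hxy))
  simp only [d1, hh]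
  rw [this.deriv]
  field_simp

variable {x y z : ℝ}

lemma gtE1_eq_zero (hf : ∀ x y u : ℝ, f x y u = (a2 * y ^ 2 + a1 * y + a0) / (x - y))
    (hh : ∀ x y u : ℝ, h x y u = (2 * a2 * x * y + a1 * (x + y) + 2 * a0) / (x - y) ^ 2)
    (hxy : x ≠ y) (hxz : x ≠ z) (hyz : y ≠ z) (u : ℝ) : gtE1 f h x y z u = 0 := by
  rw [gtE1, d3_eq_zero hf, d3_eq_zero hf, d1_f hf hyz, d1_f hf hxz, d2_f hf hyz,
    d2_f hf hxz, hf x y, hf y x, hf x z, hf y z, hh x y]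
  field_simp
  ring

lemma gtE2_eq_zero (hf : ∀ x y u : ℝ, f x y u = (a2 * y ^ 2 + a1 * y + a0) / (x - y))
    (hh : ∀ x y u : ℝ, h x y u = (2 * a2 * x * y + a1 * (x + y) + 2 * a0) / (x - y) ^ 2)
    (hxy : x ≠ y) (hxz : x ≠ z) (hyz : y ≠ z) (u : ℝ) : gtE2 f h x y z u = 0 := by
  rw [gtE2, d3_eq_zero hh, d3_eq_zero hh, d2_eq_d1_of_symm (h_symm hh),
    d2_eq_d1_of_symm (h_symm hh), d1_h hh hyz, d1_h hh hxz, d1_h hh hyz.symm, d1_h hh hxz.symm,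
    hf x y, hf y x, hf x z, hf y z, hh x y, hh y z, hh x z]
  field_simp
  ring

end GibbonsTsarevQuadratic

open GibbonsTsarevQuadratic

/-- the rational data
`f(x,y,u) = (a₂y² + a₁y + a₀)/(x−y)`, `h(x,y,u) = (2a₂xy + a₁(x+y) + 2a₀)/(x−y)²`
form a one-field Gibbons–Tsarev system: `h` is symmetric and (E1), (E2) hold. -/
theorem stmt_0 (a0 a1 a2 : ℝ) (f h : ℝ → ℝ → ℝ → ℝ)
    (hf : ∀ x y u : ℝ, f x y u = (a2 * y ^ 2 + a1 * y + a0) / (x - y))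
    (hh : ∀ x y u : ℝ, h x y u = (2 * a2 * x * y + a1 * (x + y) + 2 * a0) / (x - y) ^ 2) :
    ∀ (u x y z : ℝ), x ≠ y → x ≠ z → y ≠ z →
      h x y u = h y x u ∧ gtE1 f h x y z u = 0 ∧ gtE2 f h x y z u = 0 :=
  fun u x y _ hxy hxz hyz =>
    ⟨h_symm hh x y u, gtE1_eq_zero hf hh hxy hxz hyz u, gtE2_eq_zero hf hh hxy hxz hyz u⟩
end

section
/- Let f(x,y,u) = y(y−1)/(x−y) and h(x,y,u) = (2xy − x − y)/(x−y)^2 be the data of the Gibbons–Tsarev system (33). Then the extension ∂_i v = g(p_i, u, v) ∂_i u with g(p,u,v) = v(v−1)/(p−v) is compatible with this system: the expression E(x,y) = g_1(x,u,v)·f(y,x,u) + g_2(x,u,v) + g_3(x,u,v)·g(y,u,v) + g(x,u,v)·h(x,y,u) satisfies E(x,y) = E(y,x) for all x, y, v pairwise distinct and all u. -/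
/-- Partial derivative of `g(p,u,v)` in its first argument. -/
noncomputable def e1 (g : ℝ → ℝ → ℝ → ℝ) (p u v : ℝ) : ℝ := deriv (fun s => g s u v) p
/-- Partial derivative of `g(p,u,v)` in its second argument. -/
noncomputable def e2 (g : ℝ → ℝ → ℝ → ℝ) (p u v : ℝ) : ℝ := deriv (fun s => g p s v) u
/-- Partial derivative of `g(p,u,v)` in its third argument. -/
noncomputable def e3 (g : ℝ → ℝ → ℝ → ℝ) (p u v : ℝ) : ℝ := deriv (fun s => g p u s) v

/-- The compatibility expression `E(x,y)` for an extension `∂ᵢv = g(pᵢ,u,v) ∂ᵢu` of a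
one-field Gibbons–Tsarev system with data `f`, `h`. -/
noncomputable def extE (f h g : ℝ → ℝ → ℝ → ℝ) (x y u v : ℝ) : ℝ :=
  e1 g x u v * f y x u + e2 g x u v + e3 g x u v * g y u v + g x u v * h x y u

theorem deriv_const_div_sub (c v p : ℝ) (hp : p - v ≠ 0) :
    deriv (fun s => c / (s - v)) p = -c / (p - v) ^ 2 := by
  have hd := (hasDerivAt_const p c).fun_div ((hasDerivAt_id' p).sub_const v) hp
  rw [hd.deriv]
  ring

theorem deriv_mul_sub_one_div_sub (p v : ℝ) (hp : p - v ≠ 0) :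
    deriv (fun s => s * (s - 1) / (p - s)) v =
      ((2 * v - 1) * (p - v) + v * (v - 1)) / (p - v) ^ 2 := by
  have hnum : HasDerivAt (fun s : ℝ => s * (s - 1)) (2 * v - 1) v :=
    ((hasDerivAt_id' v).fun_mul ((hasDerivAt_id' v).sub_const 1)).congr_deriv (by ring)
  have hden : HasDerivAt (fun s : ℝ => p - s) (-1) v := by
    simpa using (hasDerivAt_id v).const_sub p
  rw [(hnum.fun_div hden hp).deriv]
  ring

section GibbonsTsarevExtension

variable {g : ℝ → ℝ → ℝ → ℝ} (hg : ∀ p u v : ℝ, g p u v = v * (v - 1) / (p - v))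
include hg

theorem e1_eq (u : ℝ) {p v : ℝ} (hp : p - v ≠ 0) :
    e1 g p u v = -(v * (v - 1)) / (p - v) ^ 2 := by
  simp only [e1, hg, deriv_const_div_sub _ _ _ hp]

theorem e2_eq_zero (p u v : ℝ) : e2 g p u v = 0 := by
  simp only [e2, hg, deriv_const]

theorem e3_eq (u : ℝ) {p v : ℝ} (hp : p - v ≠ 0) :
    e3 g p u v = ((2 * v - 1) * (p - v) + v * (v - 1)) / (p - v) ^ 2 := by
  simp only [e3, hg, deriv_mul_sub_one_div_sub _ _ hp]

end GibbonsTsarevExtension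

/-- for the Gibbons–Tsarev system (33) with `f(x,y,u) = y(y−1)/(x−y)`,
`h(x,y,u) = (2xy−x−y)/(x−y)²`, the extension `g(p,u,v) = v(v−1)/(p−v)` is compatible:
`E(x,y) = E(y,x)` for pairwise distinct `x, y, v` and all `u`. -/
theorem stmt_3 (f h g : ℝ → ℝ → ℝ → ℝ)
    (hf : ∀ x y u : ℝ, f x y u = y * (y - 1) / (x - y))
    (hh : ∀ x y u : ℝ, h x y u = (2 * x * y - x - y) / (x - y) ^ 2)
    (hg : ∀ p u v : ℝ, g p u v = v * (v - 1) / (p - v)) :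
    ∀ (x y u v : ℝ), x ≠ y → x ≠ v → y ≠ v →
      extE f h g x y u v = extE f h g y x u v := by
  intro x y u v hxy hxv hyv
  have hxy' : x - y ≠ 0 := sub_ne_zero.mpr hxy
  have hxv' : x - v ≠ 0 := sub_ne_zero.mpr hxv
  have hyv' : y - v ≠ 0 := sub_ne_zero.mpr hyv
  simp only [extE, e1_eq hg u hxv', e1_eq hg u hyv', e2_eq_zero hg, e3_eq hg u hxv',
    e3_eq hg u hyv', hf, hh, hg]
  field_simp
  ring
end

section
/- Let f(x,y,u) = y(y−1)/(x−y) and h(x,y,u) = (2xy − x − y)/(x−y)^2 be the data of the Gibbons–Tsarev system (33), and let c1, c2, c3, c4 be arbitrary constants. Then the extension ∂_i v = g(p_i, u, v) ∂_i u with g(p,u,v) = c1/(p−1) + c2/p + (c3·e^u − c4·e^{2u})·p + c4·e^{2u}·p^2 (independent of v) is compatible with this system: the expression E(x,y) = g_1(x,u)·f(y,x,u) + g_2(x,u) + g(x,u)·h(x,y,u) satisfies E(x,y) = E(y,x) for all distinct x, y with x, y ∉ {0, 1} and all u. -/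
/-! Since `g` is explicit, so are its two partial derivatives; substituting them into `E(x,y)` and
clearing the denominators `(x-1)²`, `x²`, `(x-y)²` (and their `y`-counterparts) turns the
symmetry `E(x,y) = E(y,x)` into a polynomial identity. -/

/-- The compatibility expression `E(x,y)` for an extension `∂ᵢv = g(pᵢ,u) ∂ᵢu`
(with `g` independent of `v`) of a one-field Gibbons–Tsarev system with data `f`, `h`:
`E(x,y) = g₁(x,u)·f(y,x,u) + g₂(x,u) + g(x,u)·h(x,y,u)`. -/
noncomputable def extE2 (f h : ℝ → ℝ → ℝ → ℝ) (g : ℝ → ℝ → ℝ) (x y u : ℝ) : ℝ :=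
  deriv (fun s => g s u) x * f y x u + deriv (fun s => g x s) u + g x u * h x y u

open Real

lemma extE2_eq_of_hasDerivAt {f h : ℝ → ℝ → ℝ → ℝ} {g : ℝ → ℝ → ℝ} {x y u g₁ g₂ : ℝ}
    (hg₁ : HasDerivAt (fun s => g s u) g₁ x) (hg₂ : HasDerivAt (fun s => g x s) g₂ u) :
    extE2 f h g x y u = g₁ * f y x u + g₂ + g x u * h x y u := by
  rw [extE2, hg₁.deriv, hg₂.deriv]

lemma hasDerivAt_div_sub_add_div_add_mul_add_mul_sq (c₁ c₂ a b : ℝ) {x : ℝ}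
    (hx₀ : x ≠ 0) (hx₁ : x ≠ 1) :
    HasDerivAt (fun s => c₁ / (s - 1) + c₂ / s + a * s + b * s ^ 2)
      (-c₁ / (x - 1) ^ 2 - c₂ / x ^ 2 + a + 2 * b * x) x := by
  have hd₁ := (hasDerivAt_const x c₁).div ((hasDerivAt_id x).sub_const 1) (sub_ne_zero.2 hx₁)
  have hd₂ := (hasDerivAt_const x c₂).div (hasDerivAt_id x) hx₀
  have hd₃ := (hasDerivAt_id x).const_mul a
  have hd₄ := (hasDerivAt_pow 2 x).const_mul b
  refine (((hd₁.add hd₂).add hd₃).add hd₄).congr_deriv ?_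
  simp only [id]
  ring

lemma hasDerivAt_const_add_exp_mul_add_exp_two_mul (c₀ c₃ c₄ x : ℝ) {u : ℝ} :
    HasDerivAt (fun s => c₀ + (c₃ * exp s - c₄ * exp (2 * s)) * x + c₄ * exp (2 * s) * x ^ 2)
      ((c₃ * exp u - 2 * c₄ * exp (2 * u)) * x + 2 * c₄ * exp (2 * u) * x ^ 2) u := by
  have he : HasDerivAt (fun s => exp (2 * s)) (2 * exp (2 * u)) u := by
    simpa [mul_comm] using ((hasDerivAt_id u).const_mul 2).exp
  refine (((hasDerivAt_const u c₀).add
    ((((hasDerivAt_exp u).const_mul c₃).sub (he.const_mul c₄)).mul_const x)).add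
    ((he.const_mul c₄).mul_const (x ^ 2))).congr_deriv ?_
  ring

/-- for the Gibbons–Tsarev system (33) with `f(x,y,u) = y(y−1)/(x−y)`,
`h(x,y,u) = (2xy−x−y)/(x−y)²`, and arbitrary constants `c₁, c₂, c₃, c₄`, the extension
`g(p,u) = c₁/(p−1) + c₂/p + (c₃e^u − c₄e^{2u})p + c₄e^{2u}p²` is compatible:
`E(x,y) = E(y,x)` for distinct `x, y ∉ {0,1}` and all `u`. -/
theorem stmt_6 (c1 c2 c3 c4 : ℝ) (f h : ℝ → ℝ → ℝ → ℝ) (g : ℝ → ℝ → ℝ)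
    (hf : ∀ x y u : ℝ, f x y u = y * (y - 1) / (x - y))
    (hh : ∀ x y u : ℝ, h x y u = (2 * x * y - x - y) / (x - y) ^ 2)
    (hg : ∀ p u : ℝ, g p u = c1 / (p - 1) + c2 / p
      + (c3 * Real.exp u - c4 * Real.exp (2 * u)) * p + c4 * Real.exp (2 * u) * p ^ 2) :
    ∀ (x y u : ℝ), x ≠ y → x ≠ 0 → x ≠ 1 → y ≠ 0 → y ≠ 1 →
      extE2 f h g x y u = extE2 f h g y x u := by
  intro x y u hxy hx₀ hx₁ hy₀ hy₁
  have hE (p q : ℝ) (hp₀ : p ≠ 0) (hp₁ : p ≠ 1) : extE2 f h g p q u = _ :=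
    extE2_eq_of_hasDerivAt
      (by simp only [hg]; exact hasDerivAt_div_sub_add_div_add_mul_add_mul_sq c1 c2 _ _ hp₀ hp₁)
      (by simp only [hg]; exact hasDerivAt_const_add_exp_mul_add_exp_two_mul _ c3 c4 p)
  rw [hE x y hx₀ hx₁, hE y x hy₀ hy₁, hf, hf, hh, hh, hg, hg]
  field_simp
  ring
end

section
/- Zero-curvature (pseudopotential) representation of the dispersionless Hirota equation: let a1, a2, a3 be real constants with a1 + a2 + a3 = 0, and let Z be a C² function on an open subset of ℝ³ (coordinates x, y, t) with Z_x ≠ 0 everywhere, satisfying a1·Z_x·Z_{yt} + a2·Z_y·Z_{xt} + a3·Z_t·Z_{xy} = 0. Then for every real λ with a1·λ + a3 ≠ 0, the functions α = −(a2·λ/(a1·λ + a3))·(Z_y/Z_x) and β = λ·(Z_t/Z_x) satisfy the compatibility identity α_t + α·β_x = β_y + β·α_x on the whole domain. -/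
/-! Expanding the derivatives of the quotients `Z_y/Z_x`, `Z_t/Z_x` and using the symmetry of the
second derivatives of `Z`, the defect `α_t + α β_x - β_y - β α_x` equals
`-λ(λ-1) / ((a₁λ + a₃) Z_x²)` times the left-hand side of the Hirota equation. -/

/-- Partial derivative in `x` (first coordinate of `ℝ³ = ℝ × ℝ × ℝ` with coordinates
`(x, y, t)`). -/
noncomputable def pX (F : ℝ × ℝ × ℝ → ℝ) (p : ℝ × ℝ × ℝ) : ℝ := fderiv ℝ F p (1, 0, 0)
/-- Partial derivative in `y`. -/
noncomputable def pY (F : ℝ × ℝ × ℝ → ℝ) (p : ℝ × ℝ × ℝ) : ℝ := fderiv ℝ F p (0, 1, 0)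
/-- Partial derivative in `t`. -/
noncomputable def pT (F : ℝ × ℝ × ℝ → ℝ) (p : ℝ × ℝ × ℝ) : ℝ := fderiv ℝ F p (0, 0, 1)

section

variable {E : Type*} [NormedAddCommGroup E] [NormedSpace ℝ E]

theorem fderiv_const_mul_div_apply (c : ℝ) {u v : E → ℝ} {p : E} (hu : DifferentiableAt ℝ u p)
    (hv : DifferentiableAt ℝ v p) (hvp : v p ≠ 0) (w : E) :
    fderiv ℝ (fun q => c * (u q / v q)) p w
      = c * ((fderiv ℝ u p w * v p - u p * fderiv ℝ v p w) / v p ^ 2) := by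
  have hinv : HasFDerivAt (fun q => (v q)⁻¹) ((-(v p ^ 2)⁻¹) • fderiv ℝ v p) p :=
    (hasDerivAt_inv hvp).comp_hasFDerivAt p hv.hasFDerivAt
  have hquot : HasFDerivAt (fun q => c * (u q / v q))
      (c • (u p • (-(v p ^ 2)⁻¹) • fderiv ℝ v p + (v p)⁻¹ • fderiv ℝ u p)) p := by
    simpa only [div_eq_mul_inv] using (hu.hasFDerivAt.fun_mul hinv).const_mul c
  rw [hquot.fderiv]
  simp only [neg_smul, smul_neg, smul_add, add_apply, neg_apply, smul_apply, smul_eq_mul]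
  field_simp
  ring

theorem ContDiffAt.differentiableAt_fderiv_apply {Z : E → ℝ} {p : E} (hZ : ContDiffAt ℝ 2 Z p)
    (u : E) : DifferentiableAt ℝ (fun q => fderiv ℝ Z q u) p :=
  ((hZ.fderiv_right (m := 1) le_rfl).differentiableAt one_ne_zero).clm_apply
    (differentiableAt_const u)

theorem ContDiffAt.fderiv_fderiv_apply_comm {Z : E → ℝ} {p : E} (hZ : ContDiffAt ℝ 2 Z p)
    (u v : E) :
    fderiv ℝ (fun q => fderiv ℝ Z q u) p v = fderiv ℝ (fun q => fderiv ℝ Z q v) p u := by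
  have hD : DifferentiableAt ℝ (fderiv ℝ Z) p :=
    (hZ.fderiv_right (m := 1) le_rfl).differentiableAt one_ne_zero
  simp only [fderiv_clm_apply hD (differentiableAt_const _), fderiv_fun_const, Pi.zero_apply,
    ContinuousLinearMap.comp_zero, zero_add, ContinuousLinearMap.flip_apply]
  exact hZ.isSymmSndFDerivAt (by simp) u v |>.symm

end

theorem pseudopotential_compat_of_hirota {a1 a2 a3 lam c Zx Zy Zt Zxx Zxy Zxt Zyt : ℝ}
    (ha : a1 + a2 + a3 = 0) (hZx : Zx ≠ 0) (hlam : a1 * lam + a3 ≠ 0)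
    (hc : c * (a1 * lam + a3) = -(a2 * lam))
    (hHirota : a1 * Zx * Zyt + a2 * Zy * Zxt + a3 * Zt * Zxy = 0) :
    c * ((Zyt * Zx - Zy * Zxt) / Zx ^ 2) + c * (Zy / Zx) * (lam * ((Zxt * Zx - Zt * Zxx) / Zx ^ 2))
      = lam * ((Zyt * Zx - Zt * Zxy) / Zx ^ 2)
        + lam * (Zt / Zx) * (c * ((Zxy * Zx - Zy * Zxx) / Zx ^ 2)) := by
  set R := (c - lam) * Zx * Zyt + c * (lam - 1) * Zy * Zxt + lam * (1 - c) * Zt * Zxy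
  have hR : (a1 * lam + a3) * R
      = -(lam * (lam - 1)) * (a1 * Zx * Zyt + a2 * Zy * Zxt + a3 * Zt * Zxy) := by
    linear_combination (Zx * Zyt + (lam - 1) * Zy * Zxt - lam * Zt * Zxy) * hc
      + (-lam * Zx * Zyt + lam ^ 2 * Zt * Zxy) * ha
  have hR0 : R = 0 := by
    rw [hHirota, mul_zero, mul_eq_zero] at hR
    exact hR.resolve_left hlam
  rw [← sub_eq_zero]
  calc _ = R / Zx ^ 2 := by
        field_simp
        ring
    _ = 0 := by rw [hR0, zero_div]

/-- pseudopotential representation of the dispersionless Hirota equation: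
if `a₁ + a₂ + a₃ = 0`, `Z` is C² with `Z_x ≠ 0` on an open `Ω ⊆ ℝ³` and satisfies
`a₁ Z_x Z_{yt} + a₂ Z_y Z_{xt} + a₃ Z_t Z_{xy} = 0`, then for every `λ` with
`a₁λ + a₃ ≠ 0` the functions `α = −(a₂λ/(a₁λ+a₃)) Z_y/Z_x`, `β = λ Z_t/Z_x`
satisfy `α_t + α β_x = β_y + β α_x` on `Ω`. -/
theorem stmt_9 (a1 a2 a3 : ℝ) (ha : a1 + a2 + a3 = 0)
    (Ω : Set (ℝ × ℝ × ℝ)) (hΩ : IsOpen Ω)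
    (Z : ℝ × ℝ × ℝ → ℝ) (hZ : ContDiffOn ℝ 2 Z Ω)
    (hZx : ∀ p ∈ Ω, pX Z p ≠ 0)
    (hHirota : ∀ p ∈ Ω,
      a1 * pX Z p * pT (fun q => pY Z q) p + a2 * pY Z p * pT (fun q => pX Z q) p
        + a3 * pT Z p * pY (fun q => pX Z q) p = 0)
    (lam : ℝ) (hlam : a1 * lam + a3 ≠ 0)
    (α β : ℝ × ℝ × ℝ → ℝ)
    (hα : ∀ p, α p = -(a2 * lam / (a1 * lam + a3)) * (pY Z p / pX Z p))
    (hβ : ∀ p, β p = lam * (pT Z p / pX Z p)) :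
    ∀ p ∈ Ω, pT α p + α p * pX β p = pY β p + β p * pX α p := by
  intro p hp
  have hZp : ContDiffAt ℝ 2 Z p := hZ.contDiffAt (hΩ.mem_nhds hp)
  have hquot (k : ℝ) (u d : ℝ × ℝ × ℝ) :
      fderiv ℝ (fun q => k * (fderiv ℝ Z q u / fderiv ℝ Z q (1, 0, 0))) p d
        = k * ((fderiv ℝ (fun q => fderiv ℝ Z q u) p d * fderiv ℝ Z p (1, 0, 0)
          - fderiv ℝ Z p u * fderiv ℝ (fun q => fderiv ℝ Z q (1, 0, 0)) p d)
            / fderiv ℝ Z p (1, 0, 0) ^ 2) :=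
    fderiv_const_mul_div_apply k (hZp.differentiableAt_fderiv_apply u)
      (hZp.differentiableAt_fderiv_apply _) (hZx p hp) d
  obtain rfl : α = fun q => -(a2 * lam / (a1 * lam + a3)) * (pY Z q / pX Z q) := funext hα
  obtain rfl : β = fun q => lam * (pT Z q / pX Z q) := funext hβ
  unfold pT pX pY at hHirota ⊢
  rw [hquot, hquot, hquot, hquot, hZp.fderiv_fderiv_apply_comm (0, 1, 0) (1, 0, 0),
    hZp.fderiv_fderiv_apply_comm (0, 0, 1) (1, 0, 0),
    hZp.fderiv_fderiv_apply_comm (0, 0, 1) (0, 1, 0)]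
  exact pseudopotential_compat_of_hirota ha (hZx p hp) hlam
    (by rw [neg_mul, div_mul_cancel₀ _ hlam]) (hHirota p hp)
end

section
/- Proposition (pseudopotential representation with spectral parameter): let n, N ∈ ℕ, let g_1 ≡ 1 and g_2, …, g_n : ℝ × ℝⁿ → ℝ be smooth, and let F, G : ℝ × ℝⁿ → ℝ be smooth functions satisfying, for all p, q ∈ ℝ and u ∈ ℝⁿ, the identity (Σ_{m=1}^n ∂F/∂u_m(q,u)·g_m(p,u))·(G(p,u) − G(q,u)) = (Σ_{m=1}^n ∂G/∂u_m(q,u)·g_m(p,u))·(F(p,u) − F(q,u)). Let P_1, …, P_N : ℝ → ℝ and U_1, …, U_n : ℝᴺ → ℝ be smooth with ∂_i U_m(r) = g_m(P_i(r_i), U(r))·∂_i U_1(r) for m = 2, …, n, all i, and all r ∈ ℝᴺ. Let r = (r¹,…,rᴺ) : Ω → ℝᴺ be smooth on an open Ω ⊆ ℝ³ (coordinates x, y, t) with r^i_t = F(P_i(r^i), U(r))·r^i_x and r^i_y = G(P_i(r^i), U(r))·r^i_x for each i. Set u(x,y,t) = U(r(x,y,t)). Then for every λ ∈ ℝ the compatibility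 identity ∂_y[F(λ, u)] + F(λ,u)·∂_x[G(λ, u)] = ∂_t[G(λ, u)] + G(λ,u)·∂_x[F(λ, u)] holds on Ω; i.e., the corresponding (2+1)-dimensional system admits the pseudopotential representation ψ_t = F(λ, u) ψ_x, ψ_y = G(λ, u) ψ_x with spectral parameter λ. -/
lemma clm_pi_sum {ι : Type*} [Fintype ι] [DecidableEq ι] (L : (ι → ℝ) →L[ℝ] ℝ) (w : ι → ℝ) :
    L w = ∑ i, w i * L (Pi.single i 1) := by
  have hw : (∑ i, w i • (Pi.single i 1 : ι → ℝ)) = w := by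
    funext j
    simp [Finset.sum_apply, Pi.single_apply]
  calc L w = L (∑ i, w i • (Pi.single i 1 : ι → ℝ)) := by rw [hw]
    _ = ∑ i, w i * L (Pi.single i 1) := by
        rw [map_sum]; simp [smul_eq_mul]

lemma stmt_15_key (n N : ℕ) (hn : 0 < n)
    (g : Fin n → ℝ → (Fin n → ℝ) → ℝ)
    (hg1 : ∀ (p : ℝ) (u : Fin n → ℝ), g ⟨0, hn⟩ p u = 1)
    (F : ℝ → (Fin n → ℝ) → ℝ)
    (hFs : ContDiff ℝ (⊤ : ℕ∞) (fun w : ℝ × (Fin n → ℝ) => F w.1 w.2))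
    (P : Fin N → ℝ → ℝ)
    (U : Fin n → (Fin N → ℝ) → ℝ) (hU : ∀ m, ContDiff ℝ (⊤ : ℕ∞) (U m))
    (hUg : ∀ m : Fin n, m ≠ ⟨0, hn⟩ → ∀ (i : Fin N) (x : Fin N → ℝ),
      fderiv ℝ (U m) x (Pi.single i 1) =
        g m (P i (x i)) (fun α => U α x) * fderiv ℝ (U ⟨0, hn⟩) x (Pi.single i 1))
    (Ω : Set (ℝ × ℝ × ℝ)) (hΩ : IsOpen Ω)
    (r : ℝ × ℝ × ℝ → Fin N → ℝ) (hr : ContDiffOn ℝ (⊤ : ℕ∞) r Ω)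
    (lam : ℝ) (p : ℝ × ℝ × ℝ) (hp : p ∈ Ω) (v : ℝ × ℝ × ℝ) :
    fderiv ℝ (fun q => F lam (fun m => U m (r q))) p v =
      ∑ i, (∑ m, fderiv ℝ (F lam) (fun m => U m (r p)) (Pi.single m 1)
              * g m (P i (r p i)) (fun m => U m (r p)))
            * (fderiv ℝ (U ⟨0, hn⟩) (r p) (Pi.single i 1) * fderiv ℝ (fun q => r q i) p v) := by
  classical
  set u0 : Fin n → ℝ := fun m => U m (r p) with hu0
  have hrd : DifferentiableAt ℝ r p :=
    ((hr.contDiffAt (hΩ.mem_nhds hp)).differentiableAt (by simp))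
  have hUd : ∀ m, DifferentiableAt ℝ (U m) (r p) := fun m => ((hU m).differentiable (by simp)) (r p)
  have hUcomp : ∀ m : Fin n, DifferentiableAt ℝ (fun q => U m (r q)) p :=
    fun m => (hUd m).comp p hrd
  have hucd : DifferentiableAt ℝ (fun q (m : Fin n) => U m (r q)) p :=
    differentiableAt_pi.2 hUcomp
  have hFl : DifferentiableAt ℝ (F lam) u0 := by
    have h1 : DifferentiableAt ℝ (fun w : ℝ × (Fin n → ℝ) => F w.1 w.2) (lam, u0) :=
      (hFs.differentiable (by simp)) (lam, u0)
    have h2 : DifferentiableAt ℝ (fun u : Fin n → ℝ => ((lam, u) : ℝ × (Fin n → ℝ))) u0 :=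
      DifferentiableAt.prodMk (differentiableAt_const lam) differentiableAt_id
    simpa [Function.comp_def] using h1.comp u0 h2
  have hri : ∀ i : Fin N, fderiv ℝ (fun q => r q i) p v = fderiv ℝ r p v i := by
    intro i
    have h := ((ContinuousLinearMap.proj i : (Fin N → ℝ) →L[ℝ] ℝ).hasFDerivAt.comp p
      hrd.hasFDerivAt).fderiv
    have : fderiv ℝ (fun q => r q i) p
        = (ContinuousLinearMap.proj i).comp (fderiv ℝ r p) := h
    rw [this]; rfl
  have hcomp : fderiv ℝ (fun q => F lam (fun m => U m (r q))) p v
      = fderiv ℝ (F lam) u0 (fderiv ℝ (fun q (m : Fin n) => U m (r q)) p v) := by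
    have h := fderiv_comp (𝕜 := ℝ) p hFl hucd
    have he : (fun q => F lam (fun m => U m (r q)))
        = F lam ∘ (fun q (m : Fin n) => U m (r q)) := rfl
    rw [he, h]; rfl
  rw [hcomp]
  rw [clm_pi_sum]
  have hpi : ∀ m : Fin n, fderiv ℝ (fun q (m : Fin n) => U m (r q)) p v m
      = fderiv ℝ (U m) (r p) (fderiv ℝ r p v) := by
    intro m
    rw [fderiv_pi hUcomp]
    show fderiv ℝ (fun q => U m (r q)) p v = _
    have h := fderiv_comp (𝕜 := ℝ) p (hUd m) hrd
    have he : (fun q => U m (r q)) = U m ∘ r := rfl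
    rw [he, h]; rfl
  have hstep : ∀ m : Fin n, fderiv ℝ (U m) (r p) (fderiv ℝ r p v)
      = ∑ i, (g m (P i (r p i)) u0 * fderiv ℝ (U ⟨0, hn⟩) (r p) (Pi.single i 1))
          * fderiv ℝ r p v i := by
    intro m
    rw [clm_pi_sum]
    refine Finset.sum_congr rfl fun i _ => ?_
    by_cases hm : m = ⟨0, hn⟩
    · subst hm; rw [hg1]; ring
    · rw [hUg m hm i (r p)]; ring
  calc (∑ m, fderiv ℝ (fun q (m : Fin n) => U m (r q)) p v m
          * fderiv ℝ (F lam) u0 (Pi.single m 1))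
      = ∑ m, fderiv ℝ (F lam) u0 (Pi.single m 1)
          * ∑ i, (g m (P i (r p i)) u0 * fderiv ℝ (U ⟨0, hn⟩) (r p) (Pi.single i 1))
              * fderiv ℝ r p v i := by
        refine Finset.sum_congr rfl fun m _ => ?_
        rw [hpi m, hstep m, mul_comm]
    _ = ∑ i, (∑ m, fderiv ℝ (F lam) u0 (Pi.single m 1) * g m (P i (r p i)) u0)
          * (fderiv ℝ (U ⟨0, hn⟩) (r p) (Pi.single i 1) * fderiv ℝ (fun q => r q i) p v) := by
        simp only [Finset.mul_sum]
        rw [Finset.sum_comm]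
        refine Finset.sum_congr rfl fun i _ => ?_
        rw [Finset.sum_mul, hri i]
        refine Finset.sum_congr rfl fun m _ => ?_
        ring

/-- Proposition 3, pseudopotential representation with spectral
parameter: if `F, G` solve the functional equation of a Gibbons–Tsarev system of the
form (37) (with coefficients `g₁ ≡ 1, g₂, …, gₙ`), and `u = U ∘ r` comes from a
hydrodynamic reduction `rⁱ_t = F(Pᵢ(rⁱ), U(r)) rⁱ_x`, `rⁱ_y = G(Pᵢ(rⁱ), U(r)) rⁱ_x`
with `∂ᵢU_m = g_m(Pᵢ, U) ∂ᵢU₁`, then for every spectral parameter `λ` the compatibility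
identity `∂_y F(λ,u) + F(λ,u) ∂_x G(λ,u) = ∂_t G(λ,u) + G(λ,u) ∂_x F(λ,u)` holds, i.e.
the system admits the pseudopotential representation `ψ_t = F(λ,u)ψ_x`,
`ψ_y = G(λ,u)ψ_x`.  Coordinates on `ℝ³ = ℝ × ℝ × ℝ` are `(x, y, t)`. -/
theorem stmt_15 (n N : ℕ) (hn : 0 < n)
    (g : Fin n → ℝ → (Fin n → ℝ) → ℝ)
    (hg1 : ∀ (p : ℝ) (u : Fin n → ℝ), g ⟨0, hn⟩ p u = 1)
    (hgs : ∀ m : Fin n, ContDiff ℝ (⊤ : ℕ∞) (fun w : ℝ × (Fin n → ℝ) => g m w.1 w.2))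
    (F G : ℝ → (Fin n → ℝ) → ℝ)
    (hFs : ContDiff ℝ (⊤ : ℕ∞) (fun w : ℝ × (Fin n → ℝ) => F w.1 w.2))
    (hGs : ContDiff ℝ (⊤ : ℕ∞) (fun w : ℝ × (Fin n → ℝ) => G w.1 w.2))
    (hfe : ∀ (p q : ℝ) (u : Fin n → ℝ),
      (∑ m : Fin n, fderiv ℝ (F q) u (Pi.single m 1) * g m p u) * (G p u - G q u) =
        (∑ m : Fin n, fderiv ℝ (G q) u (Pi.single m 1) * g m p u) * (F p u - F q u))
    (P : Fin N → ℝ → ℝ) (hP : ∀ i, ContDiff ℝ (⊤ : ℕ∞) (P i))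
    (U : Fin n → (Fin N → ℝ) → ℝ) (hU : ∀ m, ContDiff ℝ (⊤ : ℕ∞) (U m))
    (hUg : ∀ m : Fin n, m ≠ ⟨0, hn⟩ → ∀ (i : Fin N) (x : Fin N → ℝ),
      fderiv ℝ (U m) x (Pi.single i 1) =
        g m (P i (x i)) (fun α => U α x) * fderiv ℝ (U ⟨0, hn⟩) x (Pi.single i 1))
    (Ω : Set (ℝ × ℝ × ℝ)) (hΩ : IsOpen Ω)
    (r : ℝ × ℝ × ℝ → Fin N → ℝ) (hr : ContDiffOn ℝ (⊤ : ℕ∞) r Ω)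
    (hrt : ∀ p ∈ Ω, ∀ i : Fin N,
      fderiv ℝ (fun q => r q i) p (0, 0, 1) =
        F (P i (r p i)) (fun m => U m (r p)) * fderiv ℝ (fun q => r q i) p (1, 0, 0))
    (hry : ∀ p ∈ Ω, ∀ i : Fin N,
      fderiv ℝ (fun q => r q i) p (0, 1, 0) =
        G (P i (r p i)) (fun m => U m (r p)) * fderiv ℝ (fun q => r q i) p (1, 0, 0)) :
    ∀ (lam : ℝ), ∀ p ∈ Ω,
      fderiv ℝ (fun q => F lam (fun m => U m (r q))) p (0, 1, 0)
          + F lam (fun m => U m (r p)) *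
            fderiv ℝ (fun q => G lam (fun m => U m (r q))) p (1, 0, 0)
        = fderiv ℝ (fun q => G lam (fun m => U m (r q))) p (0, 0, 1)
            + G lam (fun m => U m (r p)) *
              fderiv ℝ (fun q => F lam (fun m => U m (r q))) p (1, 0, 0) := by
  intro lam p hp
  have kF := stmt_15_key n N hn g hg1 F hFs P U hU hUg Ω hΩ r hr lam p hp
  have kG := stmt_15_key n N hn g hg1 G hGs P U hU hUg Ω hΩ r hr lam p hp
  rw [kF (0,1,0), kF (1,0,0), kG (0,0,1), kG (1,0,0)]
  simp only [hrt p hp, hry p hp, Finset.mul_sum]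
  rw [← Finset.sum_add_distrib, ← Finset.sum_add_distrib]
  refine Finset.sum_congr rfl fun i _ => ?_
  have h := hfe (P i (r p i)) lam (fun m => U m (r p))
  linear_combination (fderiv ℝ (U ⟨0, hn⟩) (r p) (Pi.single i 1)
    * fderiv ℝ (fun q => r q i) p (1, 0, 0)) * h
end

section
/- Proposition (conservation laws of the exponential system (64)): let λ_0, …, λ_n be pairwise distinct reals and a_{r,i} (r = 1,2,3; i = 0,…,n) real constants. Let u = (u_1,…,u_n) be a smooth solution, on an open subset of ℝ³ with coordinates (t, y, x), of the system: for each i = 1,…,n, Σ_{j≠i}(a_{2,i}a_{3,j} − a_{2,j}a_{3,i})e^{u_j}(∂_t u_i − ∂_t u_j)/(λ_i−λ_j) + (a_{2,i}a_{3,0} − a_{3,i}a_{2,0})∂_t u_i/(λ_i−λ_0) + Σ_{j≠i}(a_{3,i}a_{1,j} − a_{3,j}a_{1,i})e^{u_j}(∂_y u_i − ∂_y u_j)/(λ_i−λ_j) + (a_{3,i}a_{1,0} − a_{1,i}a_{3,0})∂_y u_i/(λ_i−λ_0) + Σ_{j≠i}(a_{1,i}a_{2,j} − a_{1,j}a_{2,i})e^{u_j}(∂_x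 u_i − ∂_x u_j)/(λ_i−λ_j) + (a_{1,i}a_{2,0} − a_{2,i}a_{1,0})∂_x u_i/(λ_i−λ_0) = 0. Define, for r = 1,2,3, the regularized sums S^r_i = a_{r,0}/(λ_i−λ_0) + Σ_{m≠i} a_{r,m}e^{u_m}/(λ_i−λ_m) for i = 1,…,n, and S^r_0 = Σ_{m=1}^n a_{r,m}e^{u_m}/(λ_0−λ_m). Then the n+1 conservation laws hold: for each i = 1,…,n, ∂_t[(S^2_i·a_{3,i} − S^3_i·a_{2,i})e^{−u_i}] + ∂_y[(S^3_i·a_{1,i} − S^1_i·a_{3,i})e^{−u_i}] + ∂_x[(S^1_i·a_{2,i} − S^2_i·a_{1,i})e^{−u_i}] = 0, and also ∂_t[S^2_0·a_{3,0} − S^3_0·a_{2,0}] + ∂_y[S^3_0·a_{1,0} − S^1_0·a_{3,0}] + ∂_x[S^1_0·a_{2,0} − S^2_0·a_{1,0}] = 0. -/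
/-- Partial derivative in `t` (first coordinate of `ℝ³ = ℝ × ℝ × ℝ` with coordinates
`(t, y, x)`). -/
noncomputable def dT (F : ℝ × ℝ × ℝ → ℝ) (p : ℝ × ℝ × ℝ) : ℝ := fderiv ℝ F p (1, 0, 0)
/-- Partial derivative in `y`. -/
noncomputable def dY (F : ℝ × ℝ × ℝ → ℝ) (p : ℝ × ℝ × ℝ) : ℝ := fderiv ℝ F p (0, 1, 0)
/-- Partial derivative in `x`. -/
noncomputable def dX (F : ℝ × ℝ × ℝ → ℝ) (p : ℝ × ℝ × ℝ) : ℝ := fderiv ℝ F p (0, 0, 1)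

/-- The regularized sum `Sʳᵢ = b₀/(λᵢ − λ₀) + Σ_{m≠i} b_m e^{u_m}/(λᵢ − λ_m)`. -/
noncomputable def Sreg (n : ℕ) (lam : Fin (n + 1) → ℝ) (u : ℝ × ℝ × ℝ → Fin n → ℝ)
    (b : Fin (n + 1) → ℝ) (i : Fin n) (q : ℝ × ℝ × ℝ) : ℝ :=
  b 0 / (lam i.succ - lam 0)
    + ∑ m ∈ Finset.univ.erase i, b m.succ * Real.exp (u q m) / (lam i.succ - lam m.succ)

/-- The regularized sum `Sʳ₀ = Σ_m b_m e^{u_m}/(λ₀ − λ_m)`. -/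
noncomputable def Sreg0 (n : ℕ) (lam : Fin (n + 1) → ℝ) (u : ℝ × ℝ × ℝ → Fin n → ℝ)
    (b : Fin (n + 1) → ℝ) (q : ℝ × ℝ × ℝ) : ℝ :=
  ∑ m : Fin n, b m.succ * Real.exp (u q m) / (lam 0 - lam m.succ)


open Finset in
private lemma stmt16_sum_decomp4 {α : Type*} (s : Finset α) (F f g h k : α → ℝ)
    (c1 c2 c3 c4 : ℝ)
    (H : ∀ x ∈ s, F x = c1 * f x + c2 * g x + c3 * h x + c4 * k x) :
    ∑ x ∈ s, F x = c1 * ∑ x ∈ s, f x + c2 * ∑ x ∈ s, g x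
      + c3 * ∑ x ∈ s, h x + c4 * ∑ x ∈ s, k x := by
  rw [Finset.mul_sum, Finset.mul_sum, Finset.mul_sum, Finset.mul_sum,
    ← Finset.sum_add_distrib, ← Finset.sum_add_distrib, ← Finset.sum_add_distrib]
  exact Finset.sum_congr rfl H

private lemma stmt16_hterm (n : ℕ) (u : ℝ × ℝ × ℝ → Fin n → ℝ) (p : ℝ × ℝ × ℝ)
    (L : Fin n → (ℝ × ℝ × ℝ) →L[ℝ] ℝ) (hL : ∀ m, HasFDerivAt (fun q => u q m) (L m) p)
    (b c : ℝ) (m : Fin n) :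
    HasFDerivAt (fun q => b * Real.exp (u q m) / c)
      ((b * Real.exp (u p m) / c) • L m) p := by
  have h1 : HasFDerivAt (fun q => (b / c) * Real.exp (u q m))
      ((b / c) • (Real.exp (u p m) • L m)) p := ((hL m).exp).const_mul _
  have : (fun q => (b / c) * Real.exp (u q m)) = (fun q => b * Real.exp (u q m) / c) := by
    funext q; ring
  rw [this] at h1
  convert h1 using 1
  rw [smul_smul]; ring_nf

private lemma stmt16_hSreg (n : ℕ) (lam : Fin (n + 1) → ℝ) (u : ℝ × ℝ × ℝ → Fin n → ℝ)
    (b : Fin (n + 1) → ℝ) (i : Fin n) (p : ℝ × ℝ × ℝ)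
    (L : Fin n → (ℝ × ℝ × ℝ) →L[ℝ] ℝ) (hL : ∀ m, HasFDerivAt (fun q => u q m) (L m) p) :
    HasFDerivAt (Sreg n lam u b i)
      (∑ m ∈ Finset.univ.erase i,
        (b m.succ * Real.exp (u p m) / (lam i.succ - lam m.succ)) • L m) p := by
  have hs : HasFDerivAt
      (fun q => ∑ m ∈ Finset.univ.erase i,
        b m.succ * Real.exp (u q m) / (lam i.succ - lam m.succ))
      (∑ m ∈ Finset.univ.erase i,
        (b m.succ * Real.exp (u p m) / (lam i.succ - lam m.succ)) • L m) p :=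
    HasFDerivAt.fun_sum fun m _ => stmt16_hterm n u p L hL _ _ m
  have heq : Sreg n lam u b i = fun q => b 0 / (lam i.succ - lam 0)
      + ∑ m ∈ Finset.univ.erase i,
          b m.succ * Real.exp (u q m) / (lam i.succ - lam m.succ) := rfl
  rw [heq]
  exact hs.const_add (b 0 / (lam i.succ - lam 0))

private lemma stmt16_hSreg0 (n : ℕ) (lam : Fin (n + 1) → ℝ) (u : ℝ × ℝ × ℝ → Fin n → ℝ)
    (b : Fin (n + 1) → ℝ) (p : ℝ × ℝ × ℝ)
    (L : Fin n → (ℝ × ℝ × ℝ) →L[ℝ] ℝ) (hL : ∀ m, HasFDerivAt (fun q => u q m) (L m) p) :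
    HasFDerivAt (Sreg0 n lam u b)
      (∑ m : Fin n, (b m.succ * Real.exp (u p m) / (lam 0 - lam m.succ)) • L m) p := by
  have heq : Sreg0 n lam u b = fun q =>
      ∑ m : Fin n, b m.succ * Real.exp (u q m) / (lam 0 - lam m.succ) := rfl
  rw [heq]
  exact HasFDerivAt.fun_sum fun m _ => stmt16_hterm n u p L hL _ _ m

private lemma stmt16_antisym_sum_zero {n : ℕ} (F : Fin n → Fin n → ℝ)
    (h : ∀ m j, F m j = -F j m) :
    ∑ m : Fin n, ∑ j ∈ Finset.univ.erase m, F m j = 0 := by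
  have hdiag : ∀ m, F m m = 0 := fun m => by have := h m m; linarith
  have h1 : ∀ m : Fin n, ∑ j ∈ Finset.univ.erase m, F m j = ∑ j : Fin n, F m j := by
    intro m; rw [Finset.sum_erase_eq_sub (Finset.mem_univ m), hdiag, sub_zero]
  simp only [h1]
  have h2 : ∑ m : Fin n, ∑ j : Fin n, F m j = ∑ m : Fin n, ∑ j : Fin n, F j m :=
    Finset.sum_comm
  have h3 : ∑ m : Fin n, ∑ j : Fin n, F j m = -∑ m : Fin n, ∑ j : Fin n, F m j := by
    rw [← Finset.sum_neg_distrib]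
    exact Finset.sum_congr rfl fun m _ => by
      rw [← Finset.sum_neg_distrib]
      exact Finset.sum_congr rfl fun j _ => by rw [h j m]
  linarith

/-- Proposition 4, conservation laws of the exponential system (64):
every smooth solution `u` of system (64) admits the `n + 1` conservation laws displayed
below. -/
theorem stmt_16 (n : ℕ) (lam : Fin (n + 1) → ℝ) (hlam : Function.Injective lam)
    (a1 a2 a3 : Fin (n + 1) → ℝ)
    (Ω : Set (ℝ × ℝ × ℝ)) (hΩ : IsOpen Ω)
    (u : ℝ × ℝ × ℝ → Fin n → ℝ) (hu : ContDiffOn ℝ (⊤ : ℕ∞) u Ω)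
    (hsys : ∀ p ∈ Ω, ∀ i : Fin n,
      (∑ j ∈ Finset.univ.erase i, (a2 i.succ * a3 j.succ - a2 j.succ * a3 i.succ) *
          Real.exp (u p j) * (dT (fun q => u q i) p - dT (fun q => u q j) p)
          / (lam i.succ - lam j.succ))
        + (a2 i.succ * a3 0 - a3 i.succ * a2 0) * dT (fun q => u q i) p
          / (lam i.succ - lam 0)
        + (∑ j ∈ Finset.univ.erase i, (a3 i.succ * a1 j.succ - a3 j.succ * a1 i.succ) *
            Real.exp (u p j) * (dY (fun q => u q i) p - dY (fun q => u q j) p)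
            / (lam i.succ - lam j.succ))
        + (a3 i.succ * a1 0 - a1 i.succ * a3 0) * dY (fun q => u q i) p
          / (lam i.succ - lam 0)
        + (∑ j ∈ Finset.univ.erase i, (a1 i.succ * a2 j.succ - a1 j.succ * a2 i.succ) *
            Real.exp (u p j) * (dX (fun q => u q i) p - dX (fun q => u q j) p)
            / (lam i.succ - lam j.succ))
        + (a1 i.succ * a2 0 - a2 i.succ * a1 0) * dX (fun q => u q i) p
          / (lam i.succ - lam 0) = 0) :
    (∀ p ∈ Ω, ∀ i : Fin n,
      dT (fun q => (Sreg n lam u a2 i q * a3 i.succ - Sreg n lam u a3 i q * a2 i.succ) *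
        Real.exp (-(u q i))) p
      + dY (fun q => (Sreg n lam u a3 i q * a1 i.succ - Sreg n lam u a1 i q * a3 i.succ) *
          Real.exp (-(u q i))) p
      + dX (fun q => (Sreg n lam u a1 i q * a2 i.succ - Sreg n lam u a2 i q * a1 i.succ) *
          Real.exp (-(u q i))) p = 0) ∧
    (∀ p ∈ Ω,
      dT (fun q => Sreg0 n lam u a2 q * a3 0 - Sreg0 n lam u a3 q * a2 0) p
        + dY (fun q => Sreg0 n lam u a3 q * a1 0 - Sreg0 n lam u a1 q * a3 0) p
        + dX (fun q => Sreg0 n lam u a1 q * a2 0 - Sreg0 n lam u a2 q * a1 0) p = 0) := by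
  have hdiffAt : ∀ p ∈ Ω, DifferentiableAt ℝ u p := fun p hp =>
    (hu.contDiffAt (hΩ.mem_nhds hp)).differentiableAt (by simp)
  constructor
  · intro p hp i
    have hdiff := hdiffAt p hp
    set L : Fin n → (ℝ × ℝ × ℝ) →L[ℝ] ℝ :=
      fun m => (ContinuousLinearMap.proj m).comp (fderiv ℝ u p) with hLdef
    have hL : ∀ m, HasFDerivAt (fun q => u q m) (L m) p := fun m => by
      exact
        (ContinuousLinearMap.proj m).hasFDerivAt.comp p hdiff.hasFDerivAt
    have hS : ∀ b, HasFDerivAt (Sreg n lam u b i)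
        (∑ m ∈ Finset.univ.erase i,
          (b m.succ * Real.exp (u p m) / (lam i.succ - lam m.succ)) • L m) p :=
      fun b => stmt16_hSreg n lam u b i p L hL
    have hexp : HasFDerivAt (fun q => Real.exp (-(u q i)))
        (Real.exp (-(u p i)) • (-L i)) p := ((hL i).neg).exp
    have hF : ∀ b c : Fin (n+1) → ℝ,
        HasFDerivAt (fun q => (Sreg n lam u b i q * c i.succ - Sreg n lam u c i q * b i.succ) *
          Real.exp (-(u q i)))
        ((Sreg n lam u b i p * c i.succ - Sreg n lam u c i p * b i.succ) •
            (Real.exp (-(u p i)) • (-L i))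
          + Real.exp (-(u p i)) •
            ((c i.succ • ∑ m ∈ Finset.univ.erase i,
              (b m.succ * Real.exp (u p m) / (lam i.succ - lam m.succ)) • L m)
            - (b i.succ • ∑ m ∈ Finset.univ.erase i,
              (c m.succ * Real.exp (u p m) / (lam i.succ - lam m.succ)) • L m))) p :=
      fun b c => (((hS b).mul_const (c i.succ)).sub ((hS c).mul_const (b i.succ))).mul hexp
    rw [dT, dY, dX, (hF a2 a3).fderiv, (hF a3 a1).fderiv, (hF a1 a2).fderiv]
    simp only [ContinuousLinearMap.add_apply, ContinuousLinearMap.smul_apply,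
      ContinuousLinearMap.sub_apply, ContinuousLinearMap.coe_sum', Finset.sum_apply,
      ContinuousLinearMap.neg_apply, smul_eq_mul]
    have hdTu : ∀ m, dT (fun q => u q m) p = L m (1, 0, 0) := fun m => by
      rw [dT, (hL m).fderiv]
    have hdYu : ∀ m, dY (fun q => u q m) p = L m (0, 1, 0) := fun m => by
      rw [dY, (hL m).fderiv]
    have hdXu : ∀ m, dX (fun q => u q m) p = L m (0, 0, 1) := fun m => by
      rw [dX, (hL m).fderiv]
    have hdecomp : ∀ (b c : Fin (n+1) → ℝ) (v : ℝ × ℝ × ℝ),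
        ∑ j ∈ Finset.univ.erase i, (b i.succ * c j.succ - b j.succ * c i.succ) *
            Real.exp (u p j) * ((L i) v - (L j) v) / (lam i.succ - lam j.succ)
        = ((L i) v * b i.succ) *
            (∑ j ∈ Finset.univ.erase i,
              c j.succ * Real.exp (u p j) / (lam i.succ - lam j.succ))
          + (-((L i) v) * c i.succ) *
            (∑ j ∈ Finset.univ.erase i,
              b j.succ * Real.exp (u p j) / (lam i.succ - lam j.succ))
          + (- b i.succ) *
            (∑ j ∈ Finset.univ.erase i,
              c j.succ * Real.exp (u p j) / (lam i.succ - lam j.succ) * (L j) v)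
          + (c i.succ) *
            (∑ j ∈ Finset.univ.erase i,
              b j.succ * Real.exp (u p j) / (lam i.succ - lam j.succ) * (L j) v) := by
      intro b c v
      apply stmt16_sum_decomp4
      intro j hj
      ring
    have H := hsys p hp i
    simp only [hdTu, hdYu, hdXu] at H
    rw [hdecomp a2 a3 (1,0,0), hdecomp a3 a1 (0,1,0), hdecomp a1 a2 (0,0,1)] at H
    simp only [Sreg]
    linear_combination Real.exp (-(u p i)) * H
  · intro p hp
    have hdiff := hdiffAt p hp
    set L : Fin n → (ℝ × ℝ × ℝ) →L[ℝ] ℝ :=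
      fun m => (ContinuousLinearMap.proj m).comp (fderiv ℝ u p) with hLdef
    have hL : ∀ m, HasFDerivAt (fun q => u q m) (L m) p := fun m => by
      exact
        (ContinuousLinearMap.proj m).hasFDerivAt.comp p hdiff.hasFDerivAt
    have hdTu : ∀ m, dT (fun q => u q m) p = L m (1, 0, 0) := fun m => by
      rw [dT, (hL m).fderiv]
    have hdYu : ∀ m, dY (fun q => u q m) p = L m (0, 1, 0) := fun m => by
      rw [dY, (hL m).fderiv]
    have hdXu : ∀ m, dX (fun q => u q m) p = L m (0, 0, 1) := fun m => by
      rw [dX, (hL m).fderiv]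
    have hS0 : ∀ b, HasFDerivAt (Sreg0 n lam u b)
        (∑ m : Fin n, (b m.succ * Real.exp (u p m) / (lam 0 - lam m.succ)) • L m) p :=
      fun b => stmt16_hSreg0 n lam u b p L hL
    have hF0 : ∀ b c : Fin (n+1) → ℝ,
        HasFDerivAt (fun q => Sreg0 n lam u b q * c 0 - Sreg0 n lam u c q * b 0)
          ((c 0 • ∑ m : Fin n, (b m.succ * Real.exp (u p m) / (lam 0 - lam m.succ)) • L m)
            - (b 0 • ∑ m : Fin n,
                (c m.succ * Real.exp (u p m) / (lam 0 - lam m.succ)) • L m)) p :=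
      fun b c => ((hS0 b).mul_const (c 0)).sub ((hS0 c).mul_const (b 0))
    rw [dT, dY, dX, (hF0 a2 a3).fderiv, (hF0 a3 a1).fderiv, (hF0 a1 a2).fderiv]
    simp only [ContinuousLinearMap.add_apply, ContinuousLinearMap.smul_apply,
      ContinuousLinearMap.sub_apply, ContinuousLinearMap.coe_sum', Finset.sum_apply,
      ContinuousLinearMap.neg_apply, smul_eq_mul]
    have hflip : ∀ (x : ℝ) (m : Fin n),
        x / (lam 0 - lam m.succ) = -(x / (lam m.succ - lam 0)) :=
      fun x m => by rw [show lam 0 - lam m.succ = -(lam m.succ - lam 0) by ring, div_neg]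
    simp only [hflip]
    rw [Finset.mul_sum, Finset.mul_sum, Finset.mul_sum, Finset.mul_sum, Finset.mul_sum,
      Finset.mul_sum, ← Finset.sum_sub_distrib, ← Finset.sum_sub_distrib,
      ← Finset.sum_sub_distrib, ← Finset.sum_add_distrib, ← Finset.sum_add_distrib]
    have h0 : ∑ m : Fin n, Real.exp (u p m) *
        ((∑ j ∈ Finset.univ.erase m, (a2 m.succ * a3 j.succ - a2 j.succ * a3 m.succ) *
            Real.exp (u p j) * ((L m) (1, 0, 0) - (L j) (1, 0, 0)) / (lam m.succ - lam j.succ))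
          + (∑ j ∈ Finset.univ.erase m, (a3 m.succ * a1 j.succ - a3 j.succ * a1 m.succ) *
            Real.exp (u p j) * ((L m) (0, 1, 0) - (L j) (0, 1, 0)) / (lam m.succ - lam j.succ))
          + (∑ j ∈ Finset.univ.erase m, (a1 m.succ * a2 j.succ - a1 j.succ * a2 m.succ) *
            Real.exp (u p j) * ((L m) (0, 0, 1) - (L j) (0, 0, 1)) / (lam m.succ - lam j.succ)))
        = 0 := by
      have hrw : ∀ m : Fin n, Real.exp (u p m) *
          ((∑ j ∈ Finset.univ.erase m, (a2 m.succ * a3 j.succ - a2 j.succ * a3 m.succ) *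
              Real.exp (u p j) * ((L m) (1, 0, 0) - (L j) (1, 0, 0)) / (lam m.succ - lam j.succ))
            + (∑ j ∈ Finset.univ.erase m, (a3 m.succ * a1 j.succ - a3 j.succ * a1 m.succ) *
              Real.exp (u p j) * ((L m) (0, 1, 0) - (L j) (0, 1, 0)) / (lam m.succ - lam j.succ))
            + (∑ j ∈ Finset.univ.erase m, (a1 m.succ * a2 j.succ - a1 j.succ * a2 m.succ) *
              Real.exp (u p j) * ((L m) (0, 0, 1) - (L j) (0, 0, 1)) / (lam m.succ - lam j.succ)))
          = ∑ j ∈ Finset.univ.erase m, Real.exp (u p m) *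
              ((a2 m.succ * a3 j.succ - a2 j.succ * a3 m.succ) *
                Real.exp (u p j) * ((L m) (1, 0, 0) - (L j) (1, 0, 0)) / (lam m.succ - lam j.succ)
              + (a3 m.succ * a1 j.succ - a3 j.succ * a1 m.succ) *
                Real.exp (u p j) * ((L m) (0, 1, 0) - (L j) (0, 1, 0)) / (lam m.succ - lam j.succ)
              + (a1 m.succ * a2 j.succ - a1 j.succ * a2 m.succ) *
                Real.exp (u p j) * ((L m) (0, 0, 1) - (L j) (0, 0, 1))
                  / (lam m.succ - lam j.succ)) := by
        intro m
        rw [← Finset.sum_add_distrib, ← Finset.sum_add_distrib, Finset.mul_sum]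
      simp only [hrw]
      apply stmt16_antisym_sum_zero
      intro m j
      rw [show lam m.succ - lam j.succ = -(lam j.succ - lam m.succ) by ring]
      simp only [div_neg]
      ring
    refine Eq.trans (Finset.sum_congr rfl fun m _ => ?_) h0
    have H := hsys p hp m
    simp only [hdTu, hdYu, hdXu] at H
    linear_combination (-(Real.exp (u p m))) * H
end

section
/- Hydrodynamic reductions of the Benney chain: for m ≥ 1 define g_m(p, u) = p^{m−1} − Σ_{k=1}^{m−2} k·u_k·p^{m−2−k} (so g_1 = 1, g_2 = p). Let N ∈ ℕ, let p_1, …, p_N : ℝᴺ → ℝ and U_1, U_2, … : ℝᴺ → ℝ be smooth functions satisfying ∂_i U_m = g_m(p_i, (U_1, U_2, …))·∂_i U_1 for all m ≥ 1 and i = 1, …, N, and let r = (r¹,…,rᴺ) : Ω → ℝᴺ be smooth on an open Ω ⊆ ℝ² (coordinates x, t) with r^i_t = p_i(r)·r^i_x for each i. Then the functions u_m(x,t) = U_m(r(x,t)) satisfy the Benney moment chain: u_{1,t} = u_{2,x} and u_{m,t} = (m−1)·u_{m−1}·u_{1,x} + u_{m+1,x} for all m ≥ 2. -/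
/-- The Benney coefficient `g_m(p,u) = p^{m−1} − Σ_{k=1}^{m−2} k u_k p^{m−2−k}`. -/
noncomputable def gB (m : ℕ) (p : ℝ) (u : ℕ → ℝ) : ℝ :=
  p ^ (m - 1) - ∑ k ∈ Finset.Icc 1 (m - 2), (k : ℝ) * u k * p ^ (m - 2 - k)

lemma gB_one (p : ℝ) (u : ℕ → ℝ) : gB 1 p u = 1 := by simp [gB]

lemma gB_two (p : ℝ) (u : ℕ → ℝ) : gB 2 p u = p := by simp [gB]

lemma gB_rec (m : ℕ) (hm : 2 ≤ m) (p : ℝ) (u : ℕ → ℝ) :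
    p * gB m p u = gB (m+1) p u + ((m:ℝ) - 1) * u (m-1) := by
  obtain ⟨n, rfl⟩ : ∃ n, m = n + 2 := ⟨m - 2, by omega⟩
  simp only [gB]
  have h1 : n + 2 - 1 = n + 1 := by omega
  have h2 : n + 2 - 2 = n := by omega
  have h3 : n + 2 + 1 - 1 = n + 2 := by omega
  have h4 : n + 2 + 1 - 2 = n + 1 := by omega
  rw [h1, h2, h3, h4, Finset.sum_Icc_succ_top (by omega : 1 ≤ n + 1)]
  rw [mul_sub, Finset.mul_sum]
  have : ∀ k ∈ Finset.Icc 1 n, p * ((k:ℝ) * u k * p ^ (n - k)) = (k:ℝ) * u k * p ^ (n + 1 - k) := by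
    intro k hk
    simp only [Finset.mem_Icc] at hk
    have : n + 1 - k = (n - k) + 1 := by omega
    rw [this, pow_succ]; ring
  rw [Finset.sum_congr rfl this]
  have h5 : n + 1 - (n + 1) = 0 := by omega
  rw [h5]
  set S := ∑ k ∈ Finset.Icc 1 n, (k:ℝ) * u k * p ^ (n + 1 - k) with hS
  push_cast
  ring

/-- hydrodynamic reductions of the Benney chain: if smooth functions
`p₁, …, p_N, U₁, U₂, … : ℝᴺ → ℝ` satisfy `∂ᵢU_m = g_m(pᵢ, U) ∂ᵢU₁` for all `m ≥ 1`, and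
`r : Ω → ℝᴺ` (on an open `Ω ⊆ ℝ²` with coordinates `(x,t)`) solves `rⁱ_t = pᵢ(r) rⁱ_x`,
then `u_m = U_m ∘ r` satisfies the Benney chain `u_{1,t} = u_{2,x}`,
`u_{m,t} = (m−1) u_{m−1} u_{1,x} + u_{m+1,x}` (`m ≥ 2`). -/
theorem stmt_18 (N : ℕ)
    (P : Fin N → (Fin N → ℝ) → ℝ) (hP : ∀ i, ContDiff ℝ (⊤ : ℕ∞) (P i))
    (U : ℕ → (Fin N → ℝ) → ℝ) (hU : ∀ m, ContDiff ℝ (⊤ : ℕ∞) (U m))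
    (hUg : ∀ m : ℕ, 1 ≤ m → ∀ (i : Fin N) (x : Fin N → ℝ),
      fderiv ℝ (U m) x (Pi.single i 1) =
        gB m (P i x) (fun k => U k x) * fderiv ℝ (U 1) x (Pi.single i 1))
    (Ω : Set (ℝ × ℝ)) (hΩ : IsOpen Ω)
    (r : ℝ × ℝ → Fin N → ℝ) (hr : ContDiffOn ℝ (⊤ : ℕ∞) r Ω)
    (hrt : ∀ q ∈ Ω, ∀ i : Fin N,
      fderiv ℝ (fun z => r z i) q (0, 1) =
        P i (r q) * fderiv ℝ (fun z => r z i) q (1, 0)) :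
    ∀ q ∈ Ω,
      (fderiv ℝ (fun z => U 1 (r z)) q (0, 1) = fderiv ℝ (fun z => U 2 (r z)) q (1, 0)) ∧
      ∀ m : ℕ, 2 ≤ m →
        fderiv ℝ (fun z => U m (r z)) q (0, 1) =
          ((m : ℝ) - 1) * U (m - 1) (r q) * fderiv ℝ (fun z => U 1 (r z)) q (1, 0)
            + fderiv ℝ (fun z => U (m + 1) (r z)) q (1, 0) := by
  intro q hq
  have hrd : DifferentiableAt ℝ r q :=
    (hr.contDiffAt (hΩ.mem_nhds hq)).differentiableAt (by simp)
  -- component derivatives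
  have hcomp : ∀ i : Fin N, ∀ v : ℝ × ℝ,
      fderiv ℝ (fun z => r z i) q v = fderiv ℝ r q v i := by
    intro i v
    have h := fderiv_comp (g := (ContinuousLinearMap.proj i : (Fin N → ℝ) →L[ℝ] ℝ))
      (f := r) q ((ContinuousLinearMap.proj i : (Fin N → ℝ) →L[ℝ] ℝ).differentiableAt) hrd
    rw [ContinuousLinearMap.fderiv] at h
    have : (fun z => r z i) = (ContinuousLinearMap.proj i : (Fin N → ℝ) →L[ℝ] ℝ) ∘ r := rfl
    rw [this, h]
    rfl
  -- key expansion
  have hkey : ∀ m : ℕ, 1 ≤ m → ∀ v : ℝ × ℝ,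
      fderiv ℝ (fun z => U m (r z)) q v =
        ∑ i : Fin N, fderiv ℝ (fun z => r z i) q v *
          (gB m (P i (r q)) (fun k => U k (r q)) * fderiv ℝ (U 1) (r q) (Pi.single i 1)) := by
    intro m hm v
    have hUm : DifferentiableAt ℝ (U m) (r q) := ((hU m).differentiable (by simp)).differentiableAt
    have h := fderiv_comp (g := U m) (f := r) q hUm hrd
    have h2 : fderiv ℝ (fun z => U m (r z)) q v = fderiv ℝ (U m) (r q) (fderiv ℝ r q v) := by
      rw [show (fun z => U m (r z)) = (U m) ∘ r from rfl, h]; rfl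
    rw [h2]
    have h3 := LinearMap.pi_apply_eq_sum_univ
      ((fderiv ℝ (U m) (r q)) : (Fin N → ℝ) →ₗ[ℝ] ℝ) (fderiv ℝ r q v)
    simp only [ContinuousLinearMap.coe_coe] at h3
    rw [h3]
    refine Finset.sum_congr rfl fun i _ => ?_
    have hsingle : (fun j => if i = j then (1:ℝ) else 0) = Pi.single i 1 := by
      ext j; simp [Pi.single_apply, eq_comm]
    rw [hsingle, hUg m hm i (r q), hcomp i v]
    rw [smul_eq_mul]
  constructor
  · rw [hkey 1 le_rfl, hkey 2 (by norm_num)]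
    refine Finset.sum_congr rfl fun i _ => ?_
    rw [hrt q hq i, gB_one, gB_two]
    ring
  · intro m hm
    rw [hkey m (by omega), hkey 1 le_rfl, hkey (m+1) (by omega), Finset.mul_sum,
      ← Finset.sum_add_distrib]
    refine Finset.sum_congr rfl fun i _ => ?_
    rw [hrt q hq i, gB_one]
    have := gB_rec m hm (P i (r q)) (fun k => U k (r q))
    linear_combination (fderiv ℝ (fun z => r z i) q (1, 0) *
      fderiv ℝ (U 1) (r q) (Pi.single i 1)) * this
end
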